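/- arXiv:2501.18267 — 2 statements merged into one kernel-verified Lean document; each statement's English description precedes it below -/
import Mathlib

section
/- In the group G(D̃₄^{(1,1)}), define elements τᵢ for i ∈ ℤ by τ_{2k} = (t₁t₀)^k · t₀ · (t₁t₀)^{-k} and τ_{2k+1} = (t₁t₀)^k · t₁ · (t₁t₀)^{-k} for k ∈ ℤ. Then the braid relation s₃ τᵢ s₃ = τᵢ s₃ τᵢ holds for every i ∈ ℤ. -/
/-!
STATEMENT 5: In `G(D̃₄^{(1,1)})`, defining `τ_{2k} = (t₁t₀)^k t₀ (t₁t₀)^{-k}` and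
`τ_{2k+1} = (t₁t₀)^k t₁ (t₁t₀)^{-k}`, the braid relation `s₃ τᵢ s₃ = τᵢ s₃ τᵢ` holds for every `i ∈ ℤ`.
-/

namespace EllipticD4

abbrev GenG : Type := Fin 2 ⊕ Fin 4

def tG (i : Fin 2) : FreeGroup GenG := FreeGroup.of (Sum.inl i)
def sG (j : Fin 4) : FreeGroup GenG := FreeGroup.of (Sum.inr j)

/-- Relators of the elliptic Dynkin presentation of `G(D̃₄^{(1,1)})`. -/
def relsG : Set (FreeGroup GenG) :=
  { r | (∃ i j, r = (tG i * sG j * tG i)⁻¹ * (sG j * tG i * sG j)) ∨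
        (∃ i j, i ≠ j ∧ r = (sG i * sG j)⁻¹ * (sG j * sG i)) ∨
        (∃ i, r = (sG i * tG 1 * tG 0 * sG i * tG 1 * tG 0)⁻¹ *
                  (tG 1 * tG 0 * sG i * tG 1 * tG 0 * sG i)) }

/-- The image of the generator `tᵢ` (`i ∈ {0,1}`) in `G(D̃₄^{(1,1)})`. -/
def t (i : Fin 2) : PresentedGroup relsG := PresentedGroup.of (Sum.inl i)

/-- The image of the generator `sⱼ` (`j ∈ {1,2,3,4}`) in `G(D̃₄^{(1,1)})`;
`s 2` is the generator `s₃`. -/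
def s (j : Fin 4) : PresentedGroup relsG := PresentedGroup.of (Sum.inr j)

/-!
Consecutive terms of `τ` multiply to `c = t₁ t₀`, so each term is a conjugate of its neighbours:
`τ_{i+2} = τ_{i+1} τ_i τ_{i+1}⁻¹` and `τ_{i-1} = τ_i⁻¹ τ_{i+1} τ_i`. Starting from `τ₀ = t₀` and
`τ₁ = t₁`, it therefore suffices that braiding with `σ = s₃` passes from a pair `p, q` with
`q p = c` to `q p q⁻¹` and to `p⁻¹ q p`. Both are conjugates of the single fact that `p` braids
with `σ q σ⁻¹`, and this is where relation (P3), `σ c σ c = c σ c σ`, enters.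
-/

section Braids

variable {G : Type*} [Group G]

def Braids (a b : G) : Prop := a * b * a = b * a * b

theorem Braids.symm {a b : G} (h : Braids a b) : Braids b a := Eq.symm h

theorem Braids.map {H : Type*} [Group H] (f : G →* H) {a b : G} (h : Braids a b) :
    Braids (f a) (f b) := by
  simpa only [Braids, ← map_mul] using congrArg f h

theorem Braids.conj {a b : G} (h : Braids a b) (g : G) :
    Braids (g * a * g⁻¹) (g * b * g⁻¹) :=
  h.map (MulAut.conj g).toMonoidHom

theorem Braids.inv_mul_mul_eq_mul_mul_inv {a b : G} (h : Braids a b) :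
    b⁻¹ * a * b = a * b * a⁻¹ :=
  calc b⁻¹ * a * b = b⁻¹ * (a * b * a) * a⁻¹ := by group
    _ = b⁻¹ * (b * a * b) * a⁻¹ := by rw [h]
    _ = a * b * a⁻¹ := by group

/-- Relation (P3), with `c = t₁ t₀`. -/
def Elliptic (σ c : G) : Prop := σ * c * σ * c = c * σ * c * σ

theorem braids_conj_of_elliptic {σ p q : G} (hp : Braids σ p) (hq : Braids σ q)
    (hc : Elliptic σ (q * p)) : Braids p (σ * q * σ⁻¹) := by
  calc p * (σ * q * σ⁻¹) * p
      = p * σ * q * (σ⁻¹ * p * σ) * σ⁻¹ := by group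
    _ = p * σ * q * (p * σ * p⁻¹) * σ⁻¹ := by rw [hp.symm.inv_mul_mul_eq_mul_mul_inv]
    _ = q⁻¹ * ((q * p) * σ * (q * p) * σ) * p⁻¹ * σ⁻¹ := by group
    _ = q⁻¹ * (σ * (q * p) * σ * (q * p)) * p⁻¹ * σ⁻¹ := by rw [hc]
    _ = (q⁻¹ * σ * q) * p * (σ * q * σ⁻¹) := by group
    _ = (σ * q * σ⁻¹) * p * (σ * q * σ⁻¹) := by rw [hq.inv_mul_mul_eq_mul_mul_inv]

theorem Braids.conj_of_elliptic {σ p q : G} (hp : Braids σ p) (hq : Braids σ q)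
    (hc : Elliptic σ (q * p)) : Braids σ (q * p * q⁻¹) := by
  have h := ((braids_conj_of_elliptic hp hq hc).conj q).symm
  have hσ : q * (σ * q * σ⁻¹) * q⁻¹ = σ := by
    calc q * (σ * q * σ⁻¹) * q⁻¹ = (q * σ * q) * σ⁻¹ * q⁻¹ := by group
      _ = (σ * q * σ) * σ⁻¹ * q⁻¹ := by rw [hq]
      _ = σ := by group
  rwa [hσ] at h

theorem Braids.inv_conj_of_elliptic {σ p q : G} (hp : Braids σ p) (hq : Braids σ q)
    (hc : Elliptic σ (q * p)) : Braids σ (p⁻¹ * q * p) := by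
  have h := (braids_conj_of_elliptic hp hq hc).conj (p⁻¹ * σ⁻¹)
  have hσ : p⁻¹ * σ⁻¹ * p * (p⁻¹ * σ⁻¹)⁻¹ = σ := by
    calc p⁻¹ * σ⁻¹ * p * (p⁻¹ * σ⁻¹)⁻¹ = p⁻¹ * σ⁻¹ * (p * σ * p) := by group
      _ = p⁻¹ * σ⁻¹ * (σ * p * σ) := by rw [hp]
      _ = σ := by group
  have hq' : p⁻¹ * σ⁻¹ * (σ * q * σ⁻¹) * (p⁻¹ * σ⁻¹)⁻¹ = p⁻¹ * q * p := by group
  rwa [hσ, hq'] at h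

theorem braids_of_mul_eq {σ c : G} (x : ℤ → G) (hx : ∀ i, x (i + 1) * x i = c)
    (hc : Elliptic σ c) (h0 : Braids σ (x 0)) (h1 : Braids σ (x 1)) :
    ∀ i, Braids σ (x i) := by
  suffices h : ∀ i, Braids σ (x i) ∧ Braids σ (x (i + 1)) from fun i ↦ (h i).1
  intro i
  induction i using Int.induction_on with
  | zero => exact ⟨h0, by simpa using h1⟩
  | succ i ih =>
    have hxi : x (i + 1 + 1) = x (i + 1) * x i * (x (i + 1))⁻¹ :=
      eq_mul_inv_of_mul_eq ((hx (i + 1)).trans (hx i).symm)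
    refine ⟨ih.2, ?_⟩
    rw [hxi]
    exact ih.1.conj_of_elliptic ih.2 (by rwa [hx])
  | pred i ih =>
    have hxi : x (-i - 1) = (x (-i))⁻¹ * x (-i + 1) * x (-i) := by
      rw [mul_assoc, hx, ← hx (-i - 1), sub_add_cancel, inv_mul_cancel_left]
    rw [sub_add_cancel, hxi]
    exact ⟨ih.1.inv_conj_of_elliptic ih.2 (by rwa [hx]), ih.1⟩

theorem succ_mul_eq_of_zpow_conj (a b : G) (τ : ℤ → G)
    (heven : ∀ k : ℤ, τ (2 * k) = (a * b) ^ k * b * (a * b) ^ (-k))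
    (hodd : ∀ k : ℤ, τ (2 * k + 1) = (a * b) ^ k * a * (a * b) ^ (-k)) :
    ∀ i, τ (i + 1) * τ i = a * b := by
  intro i
  obtain ⟨c, rfl⟩ : ∃ c, a = c * b⁻¹ := ⟨a * b, by group⟩
  simp only [inv_mul_cancel_right] at *
  obtain ⟨k, rfl | rfl⟩ := Int.even_or_odd' i
  · rw [hodd, heven]
    group
  · rw [show 2 * k + 1 + 1 = 2 * (k + 1) by ring, heven, hodd]
    group

end Braids

theorem t_braids_s (i : Fin 2) (j : Fin 4) : Braids (t i) (s j) :=
  PresentedGroup.mk_eq_mk_of_inv_mul_mem (Or.inl ⟨i, j, rfl⟩)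

theorem s_elliptic (j : Fin 4) : Elliptic (s j) (t 1 * t 0) := by
  have h : s j * t 1 * t 0 * s j * t 1 * t 0 = t 1 * t 0 * s j * t 1 * t 0 * s j :=
    PresentedGroup.mk_eq_mk_of_inv_mul_mem (Or.inr (Or.inr ⟨j, rfl⟩))
  simpa only [Elliptic, mul_assoc] using h

theorem braid_s3_tau (τ : ℤ → PresentedGroup relsG)
    (heven : ∀ k : ℤ, τ (2 * k) = (t 1 * t 0) ^ k * t 0 * (t 1 * t 0) ^ (-k))
    (hodd : ∀ k : ℤ, τ (2 * k + 1) = (t 1 * t 0) ^ k * t 1 * (t 1 * t 0) ^ (-k)) :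
    ∀ i : ℤ, s 2 * τ i * s 2 = τ i * s 2 * τ i := by
  have h0 : τ 0 = t 0 := by simpa using heven 0
  have h1 : τ 1 = t 1 := by simpa using hodd 0
  refine braids_of_mul_eq τ (succ_mul_eq_of_zpow_conj _ _ τ heven hodd) (s_elliptic 2) ?_ ?_
  · exact h0 ▸ (t_braids_s 0 2).symm
  · exact h1 ▸ (t_braids_s 1 2).symm

end EllipticD4
end

section
/- The elliptic Artin monoid M'(Ẽ₈^{(1,1)}) is cancellative: for all elements u, v, w of M'(Ẽ₈^{(1,1)}), u·v = u·w implies v = w, and v·u = w·u implies v = w. -/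
namespace EllipticE8Monoid

/-- Generators: `Sum.inl i` is `tᵢ` (`i ∈ ℤ`), `Sum.inr j` is `s_(j+1)`
(so `Sum.inr 0` is `s₁`, ..., `Sum.inr 7` is `s₈`). -/
abbrev S : Type := ℤ ⊕ Fin 8

def t (i : ℤ) : FreeMonoid S := FreeMonoid.of (Sum.inl i)
def s (j : Fin 8) : FreeMonoid S := FreeMonoid.of (Sum.inr j)

/-- The pairs of (0-indexed) `s`-generators joined by an edge in the diagram,
i.e. satisfying a braid relation: (s₂,s₄), (s₃,s₅), (s₅,s₆), (s₆,s₇), (s₇,s₈). -/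
def braidPairs : List (Fin 8 × Fin 8) := [(1, 3), (2, 4), (4, 5), (5, 6), (6, 7)]

/-- The defining relations of `M'(Ẽ₈^{(1,1)})`:
`tᵢsⱼtᵢ = sⱼtᵢsⱼ` for `i ∈ ℤ` and `j ∈ {1,2,3}`;
`tᵢtᵢ₋₁ = tⱼtⱼ₋₁` for all `i, j ∈ ℤ`;
braid relations `xyx = yxy` along the edges of the `s`-part of the diagram;
commutation relations between the remaining pairs of distinct `s`-generators;
and commutation of every `tᵢ` with `s₄, …, s₈`. -/
def rels : FreeMonoid S → FreeMonoid S → Prop := fun a b =>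
  (∃ i : ℤ, ∃ j : Fin 8, j.val < 3 ∧ a = t i * s j * t i ∧ b = s j * t i * s j) ∨
  (∃ i j : ℤ, a = t i * t (i - 1) ∧ b = t j * t (j - 1)) ∨
  (∃ q ∈ braidPairs, a = s q.1 * s q.2 * s q.1 ∧ b = s q.2 * s q.1 * s q.2) ∨
  (∃ i j : Fin 8, i ≠ j ∧ (i, j) ∉ braidPairs ∧ (j, i) ∉ braidPairs ∧
    a = s i * s j ∧ b = s j * s i) ∨
  (∃ i : ℤ, ∃ j : Fin 8, 3 ≤ j.val ∧ a = t i * s j ∧ b = s j * t i)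

/-- The elliptic Artin monoid `M'(Ẽ₈^{(1,1)})`. -/
abbrev M := PresentedMonoid rels

end EllipticE8Monoid

/-!
Dehornoy's complement method. Every defining relation has the form `x θ(x,z) = z θ(z,x)` for one
word `θ(x,z)` per pair of distinct generators (`θ(tᵢ,tⱼ) = tᵢ₋₁`, and `θ(x,z) = z x` or `z` for
braiding or commuting pairs), and the relations preserve length. By induction on length, every
common right multiple `x u = y v` factors as `u = θ(x,y) w`, `v = θ(y,x) w`: along a derivation of
`x u = y v`, each relation applied at the front changes the first letter, and the cube condition
for the three letters involved carries the factorisation over. For triples with at most one `tᵢ`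
all pairs are of Artin type and no three of them braid pairwise, so the cube condition reduces to a
few identities between braid and commutation relations; triples with two or three `tᵢ` are checked
directly. Taking `x = y` gives left cancellation, and the anti-automorphism reversing words and
sending `tᵢ` to `t₋ᵢ` turns it into right cancellation.
-/

section Monoid

variable {M : Type*} [Monoid M]

def BraidRel (a b : M) : Prop := a * b * a = b * a * b

theorem BraidRel.symm {a b : M} (h : BraidRel a b) : BraidRel b a :=
  Eq.symm h

theorem BraidRel.left_assoc {a b : M} (h : BraidRel a b) (c : M) :
    a * (b * (a * c)) = b * (a * (b * c)) := by
  simp only [← mul_assoc, BraidRel] at h ⊢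
  rw [h]

theorem isRightCancelMul_of_antiHom [IsLeftCancelMul M] (ψ : M →* Mᵐᵒᵖ)
    (hψ : Function.Injective ψ) : IsRightCancelMul M where
  mul_right_cancel a b c h := by
    apply hψ
    apply MulOpposite.unop_injective
    apply mul_left_cancel (a := (ψ b).unop)
    simpa using congrArg (fun m => (ψ m).unop) h

end Monoid

theorem FreeMonoid.of_mul_eq_of_mul_iff {α : Type*} {x y : α} {u v : FreeMonoid α} :
    FreeMonoid.of x * u = .of y * v ↔ x = y ∧ u = v := by
  rw [← FreeMonoid.toList.injective.eq_iff, FreeMonoid.toList_of_mul, FreeMonoid.toList_of_mul,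
    List.cons.injEq, FreeMonoid.toList.injective.eq_iff]

theorem FreeMonoid.lift_const_ofAdd_one {α : Type*} (w : FreeMonoid α) :
    FreeMonoid.lift (fun _ => Multiplicative.ofAdd 1) w = Multiplicative.ofAdd w.length := by
  induction w using FreeMonoid.inductionOn' with
  | one => rfl
  | of_mul x w ih => simp [ih, FreeMonoid.length_mul, mul_comm]

namespace PresentedMonoid

open Relation

variable {α : Type*} {R : FreeMonoid α → FreeMonoid α → Prop}

@[simp] theorem mk_of (x : α) : mk R (.of x) = of R x := rfl

variable (R) in
def RelStep (a b : FreeMonoid α) : Prop :=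
  ∃ l r p q, (R l r ∨ R r l) ∧ a = p * l * q ∧ b = p * r * q

theorem RelStep.symm {a b : FreeMonoid α} (h : RelStep R a b) : RelStep R b a := by
  obtain ⟨l, r, p, q, hlr, rfl, rfl⟩ := h
  exact ⟨r, l, p, q, hlr.symm, rfl, rfl⟩

instance : Std.Symm (RelStep R) := ⟨fun _ _ => RelStep.symm⟩

theorem RelStep.mul {a b : FreeMonoid α} (h : RelStep R a b) (c d : FreeMonoid α) :
    RelStep R (c * a * d) (c * b * d) := by
  obtain ⟨l, r, p, q, hlr, rfl, rfl⟩ := h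
  exact ⟨l, r, c * p, q * d, hlr, by simp only [mul_assoc], by simp only [mul_assoc]⟩

theorem reflTransGen_of_mk_eq {a b : FreeMonoid α} (h : mk R a = mk R b) :
    ReflTransGen (RelStep R) a b := by
  let con : Con (FreeMonoid α) :=
    { r := ReflTransGen (RelStep R)
      iseqv := ⟨fun _ => .refl, fun h => Std.Symm.symm _ _ h, .trans⟩
      mul' := fun {a b c d} hab hcd =>
        have hl := ReflTransGen.lift (· * c) (fun x y h => by simpa using h.mul 1 c) _ _ hab
        have hr := ReflTransGen.lift (b * ·) (fun x y h => by simpa using h.mul b 1) _ _ hcd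
        hl.trans hr }
  exact Con.conGen_le (c := con) |>.mpr
    (fun x y h => .single ⟨x, y, 1, 1, .inl h, by simp, by simp⟩) (mk_eq_mk_iff.mp h)

variable (R) in
class IsHomogeneous : Prop where
  length_eq : ∀ ⦃a b : FreeMonoid α⦄, R a b → a.length = b.length

section Length

variable [IsHomogeneous R]

variable (R) in
def lengthHom : PresentedMonoid R →* Multiplicative ℕ :=
  lift (fun _ => Multiplicative.ofAdd 1) fun a b h => by
    rw [FreeMonoid.lift_const_ofAdd_one, FreeMonoid.lift_const_ofAdd_one,
      IsHomogeneous.length_eq h]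

def length (m : PresentedMonoid R) : ℕ := (lengthHom R m).toAdd

@[simp] theorem length_mk (w : FreeMonoid α) : length (mk R w) = w.length :=
  congrArg Multiplicative.toAdd (FreeMonoid.lift_const_ofAdd_one w)

@[simp] theorem length_mul (m n : PresentedMonoid R) : length (m * n) = length m + length n := by
  simp [length]

@[simp] theorem length_of (x : α) : length (of R x) = 1 := length_mk _

end Length

section Complement

variable (R) in
/-- Dehornoy's complemented presentations: up to trivial relations, the relations of `R` are
`x θ(x,z) = z θ(z,x)`, and all of these hold in the presented monoid. -/
structure IsComplement (θ : α → α → FreeMonoid α) : Prop where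
  self : ∀ x, θ x x = 1
  rel : ∀ ⦃l r⦄, R l r → l = r ∨ ∃ x z, l = .of x * θ x z ∧ r = .of z * θ z x
  of_mul : ∀ x z, of R x * mk R (θ x z) = of R z * mk R (θ z x)

def IsCommPair (θ : α → α → FreeMonoid α) (x z : α) : Prop :=
  θ x z = .of z ∧ θ z x = .of x

def IsBraidPair (θ : α → α → FreeMonoid α) (x z : α) : Prop :=
  θ x z = .of z * .of x ∧ θ z x = .of x * .of z

def IsArtinPair (θ : α → α → FreeMonoid α) (x z : α) : Prop :=
  IsCommPair θ x z ∨ IsBraidPair θ x z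

variable {θ : α → α → FreeMonoid α}

theorem IsCommPair.symm {x z : α} (h : IsCommPair θ x z) : IsCommPair θ z x := And.symm h

theorem IsBraidPair.symm {x z : α} (h : IsBraidPair θ x z) : IsBraidPair θ z x := And.symm h

theorem IsCommPair.not_isBraidPair {x z : α} (h : IsCommPair θ x z) : ¬ IsBraidPair θ x z :=
  fun h' => by simpa [h.1, FreeMonoid.length_mul] using congrArg FreeMonoid.length h'.1

theorem IsComplement.eq_or_exists_of_rel (hθ : IsComplement R θ) {l r : FreeMonoid α}
    (h : R l r ∨ R r l) : l = r ∨ ∃ x z, l = .of x * θ x z ∧ r = .of z * θ z x := by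
  rcases h with h | h
  · exact hθ.rel h
  · rcases hθ.rel h with rfl | ⟨x, z, rfl, rfl⟩
    · exact .inl rfl
    · exact .inr ⟨z, x, rfl, rfl⟩

theorem IsComplement.commute (hθ : IsComplement R θ) {x z : α} (h : IsCommPair θ x z) :
    Commute (of R x) (of R z) := by
  simpa [h.1, h.2, Commute, SemiconjBy] using hθ.of_mul x z

theorem IsComplement.braidRel (hθ : IsComplement R θ) {x z : α} (h : IsBraidPair θ x z) :
    BraidRel (of R x) (of R z) := by
  simpa [h.1, h.2, BraidRel, mul_assoc] using hθ.of_mul x z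

theorem IsCommPair.mk_left {x z : α} (h : IsCommPair θ x z) : mk R (θ x z) = of R z := by
  rw [h.1, mk_of]

theorem IsCommPair.mk_right {x z : α} (h : IsCommPair θ x z) : mk R (θ z x) = of R x :=
  h.symm.mk_left

theorem IsBraidPair.mk_left {x z : α} (h : IsBraidPair θ x z) :
    mk R (θ x z) = of R z * of R x := by
  rw [h.1, map_mul, mk_of, mk_of]

theorem IsBraidPair.mk_right {x z : α} (h : IsBraidPair θ x z) :
    mk R (θ z x) = of R x * of R z :=
  h.symm.mk_left

variable [IsHomogeneous R]

variable (R) in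
/-- `x θ(x,y)` is a least common right multiple of `x` and `y`, as seen from lengths `< N`. -/
def LcmBelow (θ : α → α → FreeMonoid α) (N : ℕ) : Prop :=
  ∀ (x y : α) (u v : PresentedMonoid R), length u < N → of R x * u = of R y * v →
    ∃ w, u = mk R (θ x y) * w ∧ v = mk R (θ y x) * w

variable (R) in
/-- Dehornoy's cube condition for `x, y, z`, restricted to elements of length `≤ N`. -/
def Cube (θ : α → α → FreeMonoid α) (N : ℕ) (x y z : α) : Prop :=
  ∀ q w : PresentedMonoid R, length (mk R (θ z x) * q) ≤ N →
    mk R (θ z x) * q = mk R (θ z y) * w →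
    ∃ w', mk R (θ x z) * q = mk R (θ x y) * w' ∧ mk R (θ y z) * w = mk R (θ y x) * w'

variable (R) in
def CubeCondition (θ : α → α → FreeMonoid α) : Prop :=
  ∀ N, LcmBelow R θ N → ∀ x y z, x ≠ y → y ≠ z → z ≠ x → Cube R θ N x y z

theorem LcmBelow.cancel {N : ℕ} (hN : LcmBelow R θ N) (hθ : IsComplement R θ)
    (a : PresentedMonoid R) {u v : PresentedMonoid R} (hu : length (a * u) ≤ N)
    (h : a * u = a * v) : u = v := by
  induction a using PresentedMonoid.inductionOn generalizing u v with | _ a => ?_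
  induction a using FreeMonoid.inductionOn' generalizing u v with
  | one => simpa using h
  | of_mul x a ih =>
    simp only [map_mul, mul_assoc, length_mul, length_mk, FreeMonoid.length_of] at h hu
    obtain ⟨w, hu', hv'⟩ := hN x x _ _ (by simp only [length_mul, length_mk]; omega) h
    rw [hθ.self, map_one, one_mul] at hu' hv'
    exact ih (by simp only [length_mul, length_mk]; omega) (hu'.trans hv'.symm)

theorem LcmBelow.peel {N : ℕ} (hN : LcmBelow R θ N) {x y : α} {a b u v : PresentedMonoid R}
    (ha : mk R (θ x y) = a) (hb : mk R (θ y x) = b) (hu : length u < N)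
    (h : of R x * u = of R y * v) : ∃ w, u = a * w ∧ v = b * w :=
  ha ▸ hb ▸ hN x y u v hu h

theorem LcmBelow.peel_of_isCommPair {N : ℕ} (hN : LcmBelow R θ N) {x y : α}
    (hxy : IsCommPair θ x y) {u v : PresentedMonoid R} (hu : length u < N)
    (h : of R x * u = of R y * v) : ∃ w, u = of R y * w ∧ v = of R x * w :=
  hN.peel (by rw [hxy.1, mk_of]) (by rw [hxy.2, mk_of]) hu h

theorem LcmBelow.peel_of_isBraidPair {N : ℕ} (hN : LcmBelow R θ N) {x y : α}
    (hxy : IsBraidPair θ x y) {u v : PresentedMonoid R} (hu : length u < N)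
    (h : of R x * u = of R y * v) :
    ∃ w, u = of R y * (of R x * w) ∧ v = of R x * (of R y * w) := by
  obtain ⟨w, rfl, rfl⟩ :=
    hN.peel (by rw [hxy.1, map_mul, mk_of, mk_of]) (by rw [hxy.2, map_mul, mk_of, mk_of]) hu h
  exact ⟨w, mul_assoc _ _ _, mul_assoc _ _ _⟩

theorem Cube.swap {N : ℕ} {x y z : α} (h : Cube R θ N y x z) : Cube R θ N x y z := by
  intro q w hq hqw
  obtain ⟨w', h₁, h₂⟩ := h w q (hqw ▸ hq) hqw.symm
  exact ⟨w', h₂, h₁⟩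

theorem cube_of_not_pairwise_ne {N : ℕ} (hN : LcmBelow R θ N) (hθ : IsComplement R θ)
    {x y z : α} (h : ¬ (x ≠ y ∧ y ≠ z ∧ z ≠ x)) : Cube R θ N x y z := by
  intro q w hq hqw
  simp only [ne_eq, not_and_or, not_not] at h
  rcases h with rfl | rfl | rfl
  · obtain rfl := hN.cancel hθ _ hq hqw
    exact ⟨mk R (θ x z) * q, by simp [hθ.self], by simp [hθ.self]⟩
  · exact ⟨q, rfl, by simpa [hθ.self] using hqw.symm⟩
  · exact ⟨w, by simpa [hθ.self] using hqw, rfl⟩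

theorem exists_complement_mul_of_reflTransGen {N : ℕ} (hθ : IsComplement R θ)
    (hcube : ∀ x y z, Cube R θ N x y z) {c d : FreeMonoid α}
    (hcd : ReflTransGen (RelStep R) c d) (x y : α) (u v : FreeMonoid α) (hc : c = .of x * u)
    (hd : d = .of y * v) (hu : u.length ≤ N) :
    ∃ w, mk R u = mk R (θ x y) * w ∧ mk R v = mk R (θ y x) * w := by
  induction hcd using ReflTransGen.head_induction_on generalizing x u with
  | refl =>
    obtain ⟨rfl, rfl⟩ := FreeMonoid.of_mul_eq_of_mul_iff.mp (hc.symm.trans hd)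
    exact ⟨mk R u, by simp [hθ.self], by simp [hθ.self]⟩
  | head hstep _ ih =>
    obtain ⟨l, r, p, q, hlr, rfl, rfl⟩ := hstep
    have hlen : l.length = r.length := by
      rcases hlr with h | h
      · exact IsHomogeneous.length_eq h
      · exact (IsHomogeneous.length_eq h).symm
    rcases hθ.eq_or_exists_of_rel hlr with rfl | ⟨x', z', rfl, rfl⟩
    · exact ih x u hc hu
    cases p using FreeMonoid.inductionOn' with
    | one =>
      -- the relation turns the first letter `x` into `z'`: the cube condition on `x, y, z'`
      rw [one_mul, mul_assoc, FreeMonoid.of_mul_eq_of_mul_iff] at hc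
      obtain ⟨hx, rfl⟩ := hc
      subst x'
      simp only [FreeMonoid.length_mul, FreeMonoid.length_of] at hlen hu
      obtain ⟨w₁, hq, hv⟩ := ih z' (θ z' x * q) (by rw [one_mul, mul_assoc]) (by
        simp only [FreeMonoid.length_mul]; omega)
      rw [map_mul] at hq
      obtain ⟨w, h₁, h₂⟩ := hcube x y z' (mk R q) w₁
        (by simp only [length_mul, length_mk]; omega) hq
      exact ⟨w, by rw [map_mul, h₁], hv.trans h₂⟩
    | of_mul h p _ =>
      simp only [mul_assoc, FreeMonoid.of_mul_eq_of_mul_iff] at hc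
      obtain ⟨hx, rfl⟩ := hc
      subst h
      obtain ⟨w, hu', hv⟩ := ih x (p * (.of z' * θ z' x' * q)) (by simp only [mul_assoc])
        (by simp only [FreeMonoid.length_mul] at hu hlen ⊢; omega)
      refine ⟨w, Eq.trans ?_ hu', hv⟩
      simpa only [map_mul, mk_of, mul_assoc] using
        congrArg (mk R p * · * mk R q) (hθ.of_mul x' z')

theorem lcmBelow_of_cube (hθ : IsComplement R θ) (hcube : CubeCondition R θ) :
    ∀ N, LcmBelow R θ N
  | 0 => fun _ _ _ _ hu => absurd hu (Nat.not_lt_zero _)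
  | N + 1 => by
    have hN := lcmBelow_of_cube hθ hcube N
    have hcube' : ∀ x y z, Cube R θ N x y z := fun x y z => by
      by_cases h : x ≠ y ∧ y ≠ z ∧ z ≠ x
      · exact hcube N hN x y z h.1 h.2.1 h.2.2
      · exact cube_of_not_pairwise_ne hN hθ h
    intro x y u v hu h
    induction u using PresentedMonoid.inductionOn with | _ u => ?_
    induction v using PresentedMonoid.inductionOn with | _ v => ?_
    rw [← mk_of, ← mk_of, ← map_mul, ← map_mul] at h
    exact exists_complement_mul_of_reflTransGen hθ hcube' (reflTransGen_of_mk_eq h) x y u v rfl rfl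
      (by simpa [Nat.lt_succ_iff] using hu)

theorem isLeftCancelMul_of_cube (hθ : IsComplement R θ) (hcube : CubeCondition R θ) :
    IsLeftCancelMul (PresentedMonoid R) where
  mul_left_cancel a _ _ h := (lcmBelow_of_cube hθ hcube _).cancel hθ a le_rfl h

section Coxeter

variable {N : ℕ} {x y z : α}

theorem cube_of_commute (hN : LcmBelow R θ N) (hzx : IsCommPair θ z x) (hzy : IsCommPair θ z y)
    (hxy : Commute (of R z) (mk R (θ x y))) (hyx : Commute (of R z) (mk R (θ y x))) :
    Cube R θ N x y z := by
  intro q w hq h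
  simp only [hzx.mk_left, hzy.mk_left, hzx.mk_right, hzy.mk_right, length_mul, length_of]
    at h hq ⊢
  obtain ⟨w₂, rfl, rfl⟩ := hN x y q w (by omega) h
  exact ⟨of R z * w₂, hxy.left_comm w₂, hyx.left_comm w₂⟩

theorem cube_of_braid_zx (hθ : IsComplement R θ) (hN : LcmBelow R θ N)
    (bzx : IsBraidPair θ z x) (cxy : IsCommPair θ x y) (czy : IsCommPair θ z y) :
    Cube R θ N x y z := by
  intro q w hq h
  simp only [bzx.mk_left, bzx.mk_right, cxy.mk_left, cxy.mk_right, czy.mk_left, czy.mk_right,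
    length_mul, length_of, mul_assoc] at h hq ⊢
  obtain ⟨w₂, hzq, rfl⟩ :=
    hN.peel_of_isCommPair cxy (by simp only [length_mul, length_of]; omega) h
  obtain ⟨w₃, rfl, rfl⟩ := hN.peel_of_isCommPair czy (by omega) hzq
  refine ⟨of R z * (of R x * w₃), ?_, (hθ.braidRel bzx).left_assoc w₃⟩
  rw [(hθ.commute cxy).left_comm, (hθ.commute czy).left_comm]

theorem cube_of_braid_zx_zy (hθ : IsComplement R θ) (hN : LcmBelow R θ N)
    (bzx : IsBraidPair θ z x) (bzy : IsBraidPair θ z y) (cxy : IsCommPair θ x y) :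
    Cube R θ N x y z := by
  intro q w hq h
  simp only [bzx.mk_left, bzx.mk_right, bzy.mk_left, bzy.mk_right, cxy.mk_left, cxy.mk_right,
    length_mul, length_of, mul_assoc] at h hq ⊢
  obtain ⟨w₂, hzq, hzw⟩ :=
    hN.peel_of_isCommPair cxy (by simp only [length_mul, length_of]; omega) h
  obtain ⟨w₃, rfl, rfl⟩ := hN.peel_of_isBraidPair bzy (by omega) hzq
  have hw := congrArg length hzw
  simp only [length_mul, length_of] at hq hw
  obtain ⟨w₄, rfl, hyw⟩ := hN.peel_of_isBraidPair bzx (by omega) hzw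
  have hyx := hN.cancel hθ (of R z) (by simp only [length_mul, length_of]; omega) hyw
  obtain ⟨w₅, rfl, rfl⟩ := hN.peel_of_isCommPair cxy.symm (by omega) hyx
  refine ⟨of R z * (of R y * (of R x * (of R z * w₅))), ?_, ?_⟩
  · rw [(hθ.commute cxy).left_comm, ← (hθ.braidRel bzx).left_assoc,
      (hθ.braidRel bzy).left_assoc]
  · rw [(hθ.commute cxy.symm).left_comm, ← (hθ.braidRel bzy).left_assoc,
      (hθ.braidRel bzx).left_assoc, (hθ.commute cxy).left_comm]

theorem cube_of_braid_zx_xy (hθ : IsComplement R θ) (hN : LcmBelow R θ N)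
    (bzx : IsBraidPair θ z x) (bxy : IsBraidPair θ x y) (czy : IsCommPair θ z y) :
    Cube R θ N x y z := by
  intro q w hq h
  simp only [bzx.mk_left, bzx.mk_right, bxy.mk_left, bxy.mk_right, czy.mk_left, czy.mk_right,
    length_mul, length_of, mul_assoc] at h hq ⊢
  obtain ⟨w₂, hzq, rfl⟩ :=
    hN.peel_of_isBraidPair bxy (by simp only [length_mul, length_of]; omega) h
  obtain ⟨w₃, rfl, hxw⟩ := hN.peel_of_isCommPair czy (by omega) hzq
  have hw := congrArg length hxw
  simp only [length_mul, length_of] at hq hw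
  obtain ⟨w₄, rfl, rfl⟩ := hN.peel_of_isBraidPair bzx.symm (by omega) hxw
  refine ⟨of R z * (of R x * (of R y * w₄)), ?_, ?_⟩
  · rw [(hθ.braidRel bxy).left_assoc, (hθ.commute czy).left_comm,
      (hθ.commute czy.symm).left_comm w₄, (hθ.braidRel bzx).left_assoc]
  · rw [(hθ.commute czy.symm).left_comm, (hθ.braidRel bzx).left_assoc,
      (hθ.braidRel bxy).left_assoc, (hθ.commute czy).left_comm]

theorem cube_of_isArtinPair (hθ : IsComplement R θ) (hN : LcmBelow R θ N)
    (hxy : IsArtinPair θ x y) (hxz : IsArtinPair θ x z) (hyz : IsArtinPair θ y z)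
    (hfree : ¬ (IsBraidPair θ x y ∧ IsBraidPair θ x z ∧ IsBraidPair θ y z)) :
    Cube R θ N x y z := by
  rcases hxy with cxy | bxy <;> rcases hxz with cxz | bxz <;> rcases hyz with cyz | byz
  · exact cube_of_commute hN cxz.symm cyz.symm (by rw [cxy.mk_left]; exact hθ.commute cyz.symm)
      (by rw [cxy.mk_right]; exact hθ.commute cxz.symm)
  · exact (cube_of_braid_zx hθ hN byz.symm cxy.symm cxz.symm).swap
  · exact cube_of_braid_zx hθ hN bxz.symm cxy cyz.symm
  · exact cube_of_braid_zx_zy hθ hN bxz.symm byz.symm cxy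
  · exact cube_of_commute hN cxz.symm cyz.symm
      (by rw [bxy.mk_left]; exact (hθ.commute cyz.symm).mul_right (hθ.commute cxz.symm))
      (by rw [bxy.mk_right]; exact (hθ.commute cxz.symm).mul_right (hθ.commute cyz.symm))
  · exact (cube_of_braid_zx_xy hθ hN byz.symm bxy.symm cxz.symm).swap
  · exact cube_of_braid_zx_xy hθ hN bxz.symm bxy cyz.symm
  · exact absurd ⟨bxy, bxz, byz⟩ hfree

end Coxeter

end Complement

end PresentedMonoid

namespace EllipticE8Monoid

open PresentedMonoid Sum

local notation "τ" i:max => PresentedMonoid.of rels (Sum.inl i)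
local notation "σ" j:max => PresentedMonoid.of rels (Sum.inr j)

def Adj : S → S → Prop
  | inl _, inl _ => False
  | inl _, inr b => b.val < 3
  | inr b, inl _ => b.val < 3
  | inr a, inr b => (a, b) ∈ braidPairs ∨ (b, a) ∈ braidPairs

instance : DecidableRel Adj := fun x z => by
  cases x <;> cases z <;> unfold Adj <;> infer_instance

theorem Adj.symm {x z : S} (h : Adj x z) : Adj z x := by
  cases x <;> cases z <;> simp only [Adj] at h ⊢ <;> tauto

theorem not_adj_triangle (x y z : S) : ¬ (Adj x y ∧ Adj x z ∧ Adj y z) := by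
  have hs : ∀ a b c : Fin 8,
      ¬ (Adj (inr a) (inr b) ∧ Adj (inr a) (inr c) ∧ Adj (inr b) (inr c)) := by
    decide
  have ht : ∀ a b : Fin 8, a.val < 3 → b.val < 3 → ¬ Adj (inr a) (inr b) := by decide
  rcases x with i | a <;> rcases y with j | b <;> rcases z with k | c
  · exact fun h => h.1
  · exact fun h => h.1
  · exact fun h => h.2.1
  · exact fun h => ht b c h.1 h.2.1 h.2.2
  · exact fun h => h.2.2
  · exact fun h => ht a c h.1 h.2.2 h.2.1
  · exact fun h => ht a b h.2.1 h.2.2 h.1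
  · exact hs a b c

def complement : S → S → FreeMonoid S
  | inl i, inl j => if i = j then 1 else t (i - 1)
  | x, z => if x = z then 1 else if Adj x z then .of z * .of x else .of z

theorem complement_self (x : S) : complement x x = 1 := by
  cases x <;> simp [complement]

theorem complement_inl_inl {i j : ℤ} (h : i ≠ j) : complement (inl i) (inl j) = t (i - 1) := by
  simp [complement, h]

theorem isBraidPair_complement {x z : S} (hxz : x ≠ z) (h : Adj x z) :
    IsBraidPair complement x z := by
  rcases x with i | a <;> rcases z with j | b
  · exact h.elim
  all_goals exact ⟨by simp [complement, hxz, h], by simp [complement, hxz.symm, h.symm]⟩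

theorem isCommPair_complement {x z : S} (hxz : x ≠ z) (hr : x.isRight ∨ z.isRight)
    (h : ¬ Adj x z) : IsCommPair complement x z := by
  have h' : ¬ Adj z x := fun h' => h h'.symm
  rcases x with i | a <;> rcases z with j | b
  · simp at hr
  all_goals exact ⟨by simp [complement, hxz, h], by simp [complement, hxz.symm, h']⟩

theorem isArtinPair_complement {x z : S} (hxz : x ≠ z) (hr : x.isRight ∨ z.isRight) :
    IsArtinPair complement x z := by
  by_cases h : Adj x z
  · exact .inr (isBraidPair_complement hxz h)
  · exact .inl (isCommPair_complement hxz hr h)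

theorem adj_of_isBraidPair {x z : S} (h : IsBraidPair complement x z) : Adj x z := by
  have hlen := congrArg FreeMonoid.length h.1
  by_cases hxz : x = z
  · subst hxz
    simp [complement_self, FreeMonoid.length_mul] at hlen
  rcases x with i | a <;> rcases z with j | b
  · simp [complement_inl_inl (by simpa using hxz), t, FreeMonoid.length_mul] at hlen
  all_goals
    by_contra hadj
    exact (isCommPair_complement hxz (by simp) hadj).not_isBraidPair h

theorem not_isBraidPair_triangle (x y z : S) :
    ¬ (IsBraidPair complement x y ∧ IsBraidPair complement x z ∧ IsBraidPair complement y z) :=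
  fun ⟨hxy, hxz, hyz⟩ =>
    not_adj_triangle x y z
      ⟨adj_of_isBraidPair hxy, adj_of_isBraidPair hxz, adj_of_isBraidPair hyz⟩

instance : IsHomogeneous rels where
  length_eq a b h := by
    rcases h with ⟨i, j, -, rfl, rfl⟩ | ⟨i, j, rfl, rfl⟩ | ⟨p, -, rfl, rfl⟩ |
      ⟨i, j, -, -, -, rfl, rfl⟩ | ⟨i, j, -, rfl, rfl⟩ <;> simp [t, s, FreeMonoid.length_mul]

theorem tau_mul_tau_sub_one (i j : ℤ) : τ i * τ (i - 1) = τ j * τ (j - 1) :=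
  mk_eq_mk_of_rel (.inr (.inl ⟨i, j, rfl, rfl⟩))

theorem braidRel_of_adj {x z : S} (h : Adj x z) : BraidRel (of rels x) (of rels z) := by
  have hts : ∀ (i : ℤ) (b : Fin 8), b.val < 3 → BraidRel (τ i) (σ b) :=
    fun i b hb => mk_eq_mk_of_rel (.inl ⟨i, b, hb, rfl, rfl⟩)
  have hss : ∀ a b : Fin 8, (a, b) ∈ braidPairs → BraidRel (σ a) (σ b) :=
    fun a b hab => mk_eq_mk_of_rel (.inr (.inr (.inl ⟨(a, b), hab, rfl, rfl⟩)))
  rcases x with i | a <;> rcases z with j | b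
  · exact h.elim
  · exact hts i b h
  · exact (hts j a h).symm
  · exact h.elim (hss a b) fun h => (hss b a h).symm

theorem commute_of_not_adj {x z : S} (hxz : x ≠ z) (hr : x.isRight ∨ z.isRight)
    (h : ¬ Adj x z) : Commute (of rels x) (of rels z) := by
  have hts : ∀ (i : ℤ) (b : Fin 8), ¬ b.val < 3 → Commute (τ i) (σ b) :=
    fun i b hb => mk_eq_mk_of_rel (.inr (.inr (.inr (.inr ⟨i, b, by omega, rfl, rfl⟩))))
  rcases x with i | a <;> rcases z with j | b
  · simp at hr
  · exact hts i b h
  · exact (hts j a h).symm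
  · simp only [Adj, not_or] at h
    exact mk_eq_mk_of_rel
      (.inr (.inr (.inr (.inl ⟨a, b, by simpa using hxz, h.1, h.2, rfl, rfl⟩))))

theorem isComplement_complement : IsComplement rels complement where
  self := complement_self
  rel l r h := by
    rcases h with ⟨i, j, hj, rfl, rfl⟩ | ⟨i, j, rfl, rfl⟩ | ⟨p, hp, rfl, rfl⟩ |
      ⟨i, j, hij, hij', hji', rfl, rfl⟩ | ⟨i, j, hj, rfl, rfl⟩
    · have hb := isBraidPair_complement (x := inl i) (z := inr j) (by simp) hj
      exact .inr ⟨inl i, inr j, by rw [hb.1]; rfl, by rw [hb.2]; rfl⟩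
    · by_cases hij : i = j
      · exact .inl (by rw [hij])
      · exact .inr ⟨inl i, inl j, by rw [complement_inl_inl hij]; rfl,
          by rw [complement_inl_inl (Ne.symm hij)]; rfl⟩
    · have hne : p.1 ≠ p.2 := by revert hp; revert p; decide
      have hb := isBraidPair_complement (x := inr p.1) (z := inr p.2) (by simpa using hne) (.inl hp)
      exact .inr ⟨inr p.1, inr p.2, by rw [hb.1]; rfl, by rw [hb.2]; rfl⟩
    · have hc := isCommPair_complement (x := inr i) (z := inr j) (by simpa using hij) (by simp)
        (by simp [Adj, hij', hji'])
      exact .inr ⟨inr i, inr j, by rw [hc.1]; rfl, by rw [hc.2]; rfl⟩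
    · have hc := isCommPair_complement (x := inl i) (z := inr j) (by simp) (by simp)
        (by simp [Adj]; omega)
      exact .inr ⟨inl i, inr j, by rw [hc.1]; rfl, by rw [hc.2]; rfl⟩
  of_mul x z := by
    by_cases hxz : x = z
    · rw [hxz]
    by_cases hr : x.isRight ∨ z.isRight
    · by_cases h : Adj x z
      · have hb := isBraidPair_complement hxz h
        simpa only [hb.mk_left, hb.mk_right, BraidRel, mul_assoc] using braidRel_of_adj h
      · have hc := isCommPair_complement hxz hr h
        simpa only [hc.mk_left, hc.mk_right] using (commute_of_not_adj hxz hr h).eq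
    · rcases x with i | a <;> rcases z with j | b <;> simp at hr
      have hij : i ≠ j := by simpa using hxz
      rw [complement_inl_inl hij, complement_inl_inl (Ne.symm hij)]
      exact tau_mul_tau_sub_one i j

theorem tau_mul_tau_sub_one_mul (i j : ℤ) (w : M) :
    τ i * (τ (i - 1) * w) = τ j * (τ (j - 1) * w) := by
  rw [← mul_assoc, tau_mul_tau_sub_one i j, mul_assoc]

theorem mk_complement_inl_inl {i j : ℤ} (h : i ≠ j) :
    mk rels (complement (inl i) (inl j)) = τ (i - 1) := by
  rw [complement_inl_inl h]; rfl

theorem isBraidPair_inl_inr (i : ℤ) {b : Fin 8} (hb : b.val < 3) :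
    IsBraidPair complement (inl i) (inr b) :=
  isBraidPair_complement (by simp) hb

theorem isCommPair_inl_inr (i : ℤ) {b : Fin 8} (hb : 3 ≤ b.val) :
    IsCommPair complement (inl i) (inr b) :=
  isCommPair_complement (by simp) (by simp) (by simp [Adj]; omega)

variable {N : ℕ}

theorem cube_ttt (hN : LcmBelow rels complement N) {i j k : ℤ} (hij : i ≠ j) (hjk : j ≠ k)
    (hki : k ≠ i) : Cube rels complement N (inl i) (inl j) (inl k) := by
  intro q w hq h
  simp only [mk_complement_inl_inl hij, mk_complement_inl_inl hjk, mk_complement_inl_inl hki,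
    mk_complement_inl_inl hij.symm, mk_complement_inl_inl hjk.symm,
    mk_complement_inl_inl hki.symm] at hq h ⊢
  obtain rfl := hN.cancel isComplement_complement _ hq h
  exact ⟨q, rfl, rfl⟩

theorem cube_tst_of_commute (hN : LcmBelow rels complement N) {i k : ℤ} (hik : i ≠ k)
    {b : Fin 8} (hb : 3 ≤ b.val) : Cube rels complement N (inl i) (inr b) (inl k) := by
  intro q w hq h
  simp only [mk_complement_inl_inl hik, mk_complement_inl_inl hik.symm,
    (isCommPair_inl_inr i hb).mk_left, (isCommPair_inl_inr i hb).mk_right,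
    (isCommPair_inl_inr k hb).mk_left, (isCommPair_inl_inr k hb).mk_right,
    length_mul, length_of] at hq h ⊢
  obtain ⟨w₂, rfl, rfl⟩ := hN.peel_of_isCommPair (isCommPair_inl_inr (k - 1) hb) (by omega) h
  exact ⟨τ (i - 1) * w₂,
    (isComplement_complement.commute (isCommPair_inl_inr (i - 1) hb)).left_comm w₂,
    tau_mul_tau_sub_one_mul k i w₂⟩

theorem cube_tst_of_braid (hN : LcmBelow rels complement N) {i k : ℤ} (hik : i ≠ k)
    {b : Fin 8} (hb : b.val < 3) : Cube rels complement N (inl i) (inr b) (inl k) := by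
  have braid m := isComplement_complement.braidRel (isBraidPair_inl_inr m hb)
  intro q w hq h
  simp only [mk_complement_inl_inl hik, mk_complement_inl_inl hik.symm,
    (isBraidPair_inl_inr i hb).mk_left, (isBraidPair_inl_inr i hb).mk_right,
    (isBraidPair_inl_inr k hb).mk_left, (isBraidPair_inl_inr k hb).mk_right,
    length_mul, length_of, mul_assoc] at hq h ⊢
  obtain ⟨w₂, rfl, hw⟩ := hN.peel_of_isBraidPair (isBraidPair_inl_inr (k - 1) hb) (by omega) h
  have hlen := congrArg length hw
  simp only [length_mul, length_of] at hq hlen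
  obtain ⟨w₃, rfl, hw₂⟩ := hN.peel (mk_complement_inl_inl (show k ≠ k - 1 by omega))
    (mk_complement_inl_inl (show k - 1 ≠ k by omega)) (by omega) hw
  obtain ⟨w₄, rfl, rfl⟩ :=
    hN.peel_of_isBraidPair (isBraidPair_inl_inr (k - 1 - 1) hb).symm (by omega) hw₂
  refine ⟨τ (i - 1) * (σ b * (τ (i - 1 - 1) * w₄)), ?_, ?_⟩
  · rw [tau_mul_tau_sub_one_mul (k - 1) (i - 1), (braid (i - 1)).left_assoc,
      ← (braid (i - 1 - 1)).left_assoc, tau_mul_tau_sub_one_mul (i - 1) i]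
  · rw [← (braid (k - 1)).left_assoc, tau_mul_tau_sub_one_mul k i,
      tau_mul_tau_sub_one_mul (k - 1) (i - 1), (braid (i - 1)).left_assoc]

theorem cube_tts_of_braid (hN : LcmBelow rels complement N) {i j : ℤ} (hij : i ≠ j)
    {c : Fin 8} (hc : c.val < 3) : Cube rels complement N (inl i) (inl j) (inr c) := by
  have braid m := isComplement_complement.braidRel (isBraidPair_inl_inr m hc)
  intro q w hq h
  simp only [mk_complement_inl_inl hij, mk_complement_inl_inl hij.symm,
    (isBraidPair_inl_inr i hc).mk_left, (isBraidPair_inl_inr i hc).mk_right,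
    (isBraidPair_inl_inr j hc).mk_left, (isBraidPair_inl_inr j hc).mk_right,
    length_mul, length_of, mul_assoc] at hq h ⊢
  have hlen := congrArg length h
  simp only [length_mul, length_of] at hlen
  obtain ⟨w₂, hq', hw⟩ := hN.peel (mk_complement_inl_inl hij) (mk_complement_inl_inl hij.symm)
    (by simp only [length_mul, length_of]; omega) h
  obtain ⟨w₃, rfl, rfl⟩ :=
    hN.peel_of_isBraidPair (isBraidPair_inl_inr (i - 1) hc).symm (by omega) hq'
  simp only [length_mul, length_of] at hq hlen
  obtain ⟨w₄, rfl, hw₃⟩ :=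
    hN.peel_of_isBraidPair (isBraidPair_inl_inr (j - 1) hc).symm (by omega) hw
  have hw₄ := hN.cancel isComplement_complement (σ c)
    (by simp only [length_mul, length_of]; omega) hw₃
  obtain ⟨w₅, rfl, rfl⟩ := hN.peel (mk_complement_inl_inl (show i - 1 ≠ j - 1 by omega))
    (mk_complement_inl_inl (show j - 1 ≠ i - 1 by omega)) (by omega) hw₄
  have key m : τ (m - 1) * (σ c * (τ (m - 1) * (τ (m - 1 - 1) * (σ c * w₅)))) =
      σ c * (τ m * (τ (m - 1) * (σ c * (τ (m - 1 - 1) * w₅)))) := by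
    rw [(braid (m - 1)).left_assoc, ← (braid (m - 1 - 1)).left_assoc,
      tau_mul_tau_sub_one_mul (m - 1) m]
  refine ⟨σ c * (τ (i - 1) * (τ (i - 1 - 1) * (σ c * w₅))), (key i).symm, ?_⟩
  rw [tau_mul_tau_sub_one_mul (i - 1) (j - 1), key j]

theorem cube_tst (hN : LcmBelow rels complement N) {i k : ℤ} (hik : i ≠ k) (b : Fin 8) :
    Cube rels complement N (inl i) (inr b) (inl k) :=
  if hb : b.val < 3 then cube_tst_of_braid hN hik hb
  else cube_tst_of_commute hN hik (Nat.not_lt.mp hb)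

theorem cube_tts (hN : LcmBelow rels complement N) {i j : ℤ} (hij : i ≠ j) (c : Fin 8) :
    Cube rels complement N (inl i) (inl j) (inr c) := by
  by_cases hc : c.val < 3
  · exact cube_tts_of_braid hN hij hc
  replace hc := Nat.not_lt.mp hc
  have hσ m : Commute (σ c) (τ m) :=
    (isComplement_complement.commute (isCommPair_inl_inr m hc)).symm
  exact cube_of_commute hN (isCommPair_inl_inr i hc).symm (isCommPair_inl_inr j hc).symm
    (by rw [mk_complement_inl_inl hij]; exact hσ _)
    (by rw [mk_complement_inl_inl hij.symm]; exact hσ _)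

theorem cubeCondition_complement : CubeCondition rels complement := by
  intro N hN x y z hxy hyz hzx
  rcases x with i | a <;> rcases y with j | b <;> rcases z with k | c
  case inl.inl.inl =>
    exact cube_ttt hN (by simpa using hxy) (by simpa using hyz) (by simpa using hzx)
  case inl.inl.inr => exact cube_tts hN (by simpa using hxy) c
  case inl.inr.inl => exact cube_tst hN (by simpa using hzx.symm) b
  case inr.inl.inl => exact (cube_tst hN (by simpa using hyz) a).swap
  all_goals
    exact cube_of_isArtinPair isComplement_complement hN
      (isArtinPair_complement hxy (by simp)) (isArtinPair_complement hzx.symm (by simp))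
      (isArtinPair_complement hyz (by simp)) (not_isBraidPair_triangle _ _ _)

instance : IsLeftCancelMul M :=
  isLeftCancelMul_of_cube isComplement_complement cubeCondition_complement

-- Negating indices makes the reversed relation `tᵢ₋₁ tᵢ = tⱼ₋₁ tⱼ` again one of the form
-- `tₘ tₘ₋₁ = tₙ tₙ₋₁`.
def reflect : S → S := Sum.map (fun i => -i) id

def mirror : M →* Mᵐᵒᵖ :=
  lift (fun x => MulOpposite.op (of rels (reflect x))) fun a b h => by
    apply MulOpposite.unop_injective
    rcases h with ⟨i, j, hj, rfl, rfl⟩ | ⟨i, j, rfl, rfl⟩ | ⟨p, hp, rfl, rfl⟩ |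
      ⟨i, j, hij, hij', hji', rfl, rfl⟩ | ⟨i, j, hj, rfl, rfl⟩ <;>
      simp only [t, s, reflect, map_mul, FreeMonoid.lift_eval_of, MulOpposite.unop_mul,
        MulOpposite.unop_op, Sum.map_inl, Sum.map_inr, id, mul_assoc]
    · simpa only [BraidRel, mul_assoc] using braidRel_of_adj (x := inl (-i)) (z := inr j) hj
    · have h := tau_mul_tau_sub_one (-(i - 1)) (-(j - 1))
      rwa [show -(i - 1) - 1 = -i by ring, show -(j - 1) - 1 = -j by ring] at h
    · simpa only [BraidRel, mul_assoc] using
        braidRel_of_adj (x := inr p.1) (z := inr p.2) (.inl hp)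
    · exact (commute_of_not_adj (x := inr i) (z := inr j) (by simpa using hij) (by simp)
        (by simp [Adj, hij', hji'])).eq.symm
    · exact (commute_of_not_adj (x := inl (-i)) (z := inr j) (by simp) (by simp)
        (by simp [Adj]; omega)).eq.symm

theorem mirror_of (x : S) : mirror (of rels x) = MulOpposite.op (of rels (reflect x)) := rfl

theorem mirror_mirror (m : M) : (mirror (mirror m).unop).unop = m := by
  induction m using PresentedMonoid.inductionOn with | _ w => ?_
  induction w using FreeMonoid.inductionOn' with
  | one => simp
  | of_mul x w ih =>
    rw [map_mul, mk_of, map_mul, MulOpposite.unop_mul, map_mul, MulOpposite.unop_mul, ih,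
      mirror_of, MulOpposite.unop_op, mirror_of, MulOpposite.unop_op]
    cases x <;> simp [reflect]

instance : IsRightCancelMul M :=
  isRightCancelMul_of_antiHom mirror fun a b h => by
    simpa only [mirror_mirror] using congrArg (fun n => (mirror n.unop).unop) h

theorem cancellative :
    ∀ u v w : M, (u * v = u * w → v = w) ∧ (v * u = w * u → v = w) :=
  fun _ _ _ => ⟨mul_left_cancel, mul_right_cancel⟩

end EllipticE8Monoid
end
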